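/- With v = v_P + v_D, the vector -v_P is the metric projection of -v onto the polar cone of the recession cone of cl(dom f): -v_P = P_{(rec(cl dom f))°}(-v). -/

import Mathlib

open scoped InnerProductSpace Pointwise Classical
open Filter Topology

noncomputable section

variable {H : Type*} [NormedAddCommGroup H] [InnerProductSpace ℝ H]

/-- The effective domain of an extended-real-valued function. -/
def fdom {α : Type*} (f : α → EReal) : Set α := {x | f x ≠ ⊤}

/-- The Fenchel conjugate `f*(u) = sup_x (⟪x, u⟫ - f x)`. -/
def fconj (f : H → EReal) : H → EReal :=
  fun u => ⨆ x : H, ((⟪x, u⟫_ℝ : ℝ) : EReal) - f x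

/-- The recession function `(rec f)(y) = sup_{x ∈ dom f} (f (x + y) - f x)`. -/
def recFn (f : H → EReal) : H → EReal :=
  fun y => ⨆ x ∈ fdom f, (f (x + y) - f x)

/-- A proper function: never `-∞` and not identically `+∞`. -/
def ProperFn {α : Type*} (f : α → EReal) : Prop := (∀ x, f x ≠ ⊥) ∧ ∃ x, f x ≠ ⊤

/-- Convexity of an extended-real-valued function, via convexity of its epigraph. -/
def ConvexFn (f : H → EReal) : Prop :=
  Convex ℝ {p : H × ℝ | f p.1 ≤ (p.2 : EReal)}

/-- `v` is the element of minimum norm of `S`, i.e. `v = P_S 0`, the metric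
projection of `0` onto `S`. -/
def IsMinNormPoint (S : Set H) (v : H) : Prop := v ∈ S ∧ ∀ w ∈ S, ‖v‖ ≤ ‖w‖

/-- `p` is the metric projection of `x` onto `S`, i.e. `p = P_S x`. -/
def IsProjOn (S : Set H) (x p : H) : Prop := p ∈ S ∧ ∀ w ∈ S, dist x p ≤ dist x w

/-- The polar cone `S° = {u | ∀ x ∈ S, ⟪x, u⟫ ≤ 0}`. -/
def polarCone (s : Set H) : Set H := {u | ∀ x ∈ s, ⟪x, u⟫_ℝ ≤ 0}

/-- The recession cone `rec S = {x | ∀ y ∈ S, x + y ∈ S}`. -/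
def recCone (s : Set H) : Set H := {x | ∀ y ∈ s, x + y ∈ s}

/-- `p = prox_f w`: `p` minimizes `y ↦ f y + ½‖y - w‖²`. -/
def IsProxOf (f : H → EReal) (w p : H) : Prop :=
  ∀ y : H, f p + ((1 / 2 * ‖p - w‖ ^ 2 : ℝ) : EReal) ≤ f y + ((1 / 2 * ‖y - w‖ ^ 2 : ℝ) : EReal)

/-!
The point `-vP` lies in `K° = (rec (cl dom f))°` because `K ⊆ rec (cl (dom f - dom g))` and a
minimum-norm point `v` of a convex set `S` satisfies `⟪y, v⟫ ≥ 0` for every `y ∈ rec S`. The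
projection inequality then reduces to `⟪vD, w⟫ ≥ 0` for `w ∈ K°` and `⟪vD, vP⟫ ≥ 0`, i.e. to `-vD`
being a recession direction of both `cl (dom f)` and `cl (dom g)`. By separation, `rec (cl C)`
contains the polar of the barrier cone of a convex set `C`; and if
`⟪·, u⟫ ≤ M` on `dom f`, then `f* (u + w) ≤ f* w + M`, so `u` is a recession direction of
`dom f* + dom g*` and hence pairs nonnegatively with its minimum-norm point `vD`.
-/

section RecessionCone

variable {E : Type*} [NormedAddCommGroup E]

lemma recCone_subset_recCone_closure (s : Set E) : recCone s ⊆ recCone (closure s) :=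
  fun y hy _ hz => map_mem_closure (continuous_const_add y) hz fun x hx => hy x hx

lemma recCone_subset_recCone_add_left (s t : Set E) : recCone s ⊆ recCone (s + t) := by
  rintro y hy _ ⟨a, ha, b, hb, rfl⟩
  rw [← add_assoc]
  exact Set.add_mem_add (hy a ha) hb

lemma recCone_subset_recCone_add_right (s t : Set E) : recCone t ⊆ recCone (s + t) := by
  rw [add_comm s t]
  exact recCone_subset_recCone_add_left t s

lemma recCone_closure_subset_recCone_closure_sub_left (s t : Set E) :
    recCone (closure s) ⊆ recCone (closure (s - t)) := by
  intro y hy z hz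
  rw [← closure_closure]
  refine map_mem_closure (continuous_const_add y) hz ?_
  rintro _ ⟨a, ha, b, hb, rfl⟩
  rw [← add_sub_assoc]
  exact map_mem_closure (f := (· - b)) (continuous_sub_right b) (hy a (subset_closure ha))
    fun c hc => Set.sub_mem_sub hc hb

lemma neg_mem_recCone_closure_sub {s t : Set E} {y : E} (hy : y ∈ recCone (closure t)) :
    -y ∈ recCone (closure (s - t)) := by
  intro z hz
  rw [← closure_closure]
  refine map_mem_closure (continuous_const_add (-y)) hz ?_
  rintro _ ⟨a, ha, b, hb, rfl⟩
  rw [show -y + (a - b) = a - (y + b) by abel]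
  exact map_mem_closure (continuous_sub_left a) (hy b (subset_closure hb))
    fun c hc => Set.sub_mem_sub ha hc

end RecessionCone

def barrierCone (s : Set H) : Set H := {u | BddAbove ((⟪·, u⟫_ℝ) '' s)}

lemma polarCone_anti {s t : Set H} (h : s ⊆ t) : polarCone t ⊆ polarCone s :=
  fun _ hu x hx => hu x (h hx)

lemma polarCone_barrierCone_subset_recCone_closure [CompleteSpace H] {s : Set H}
    (hs : Convex ℝ s) : polarCone (barrierCone s) ⊆ recCone (closure s) := by
  intro d hd z hz
  by_contra hdz
  obtain ⟨φ, M, hφs, hφdz⟩ :=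
    geometric_hahn_banach_closed_point hs.closure isClosed_closure hdz
  set u := (InnerProductSpace.toDual ℝ H).symm φ
  have hφ : ∀ x, φ x = ⟪x, u⟫_ℝ := fun x => by
    rw [real_inner_comm, InnerProductSpace.toDual_symm_apply]
  have hu : u ∈ barrierCone s := ⟨M, by
    rintro _ ⟨x, hx, rfl⟩
    exact (hφ x ▸ hφs x (subset_closure hx)).le⟩
  have hdu : φ d ≤ 0 := hφ d ▸ real_inner_comm d u ▸ hd u hu
  have := hφs z hz
  rw [map_add] at hφdz
  linarith

lemma IsMinNormPoint.neg_mem_polarCone_recCone {S : Set H} {v : H} (hS : Convex ℝ S)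
    (hv : IsMinNormPoint S v) : -v ∈ polarCone (recCone S) := by
  have : Nonempty S := ⟨⟨v, hv.1⟩⟩
  have hinf : ‖(0 : H) - v‖ = ⨅ w : S, ‖(0 : H) - w‖ := by
    simp only [zero_sub, norm_neg]
    exact le_antisymm (le_ciInf fun w => hv.2 w w.2)
      (ciInf_le ⟨0, Set.forall_mem_range.2 fun _ => norm_nonneg _⟩ (⟨v, hv.1⟩ : S))
  intro y hy
  simpa [real_inner_comm] using
    (norm_eq_iInf_iff_real_inner_le_zero hS hv.1).1 hinf (y + v) (hy v hv.1)

lemma isProjOn_of_inner_le {S : Set H} {x p : H} (hp : p ∈ S)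
    (h : ∀ w ∈ S, ⟪x - p, w - p⟫_ℝ ≤ 0) : IsProjOn S x p := by
  refine ⟨hp, fun w hw => ?_⟩
  have hsq : ‖x - w‖ ^ 2 = ‖x - p‖ ^ 2 - 2 * ⟪x - p, w - p⟫_ℝ + ‖w - p‖ ^ 2 := by
    rw [← norm_sub_sq_real, sub_sub_sub_cancel_right]
  rw [dist_eq_norm, dist_eq_norm]
  nlinarith [h w hw, norm_nonneg (x - w), norm_nonneg (x - p)]

lemma ConvexFn.convex_fdom {h : H → EReal} (hh : ConvexFn h) : Convex ℝ (fdom h) := by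
  have : fdom h = Prod.fst '' {p : H × ℝ | h p.1 ≤ p.2} := by
    ext x
    constructor
    · intro hx
      exact ⟨(x, (h x).toReal), EReal.le_coe_toReal hx, rfl⟩
    · rintro ⟨⟨x, r⟩, hr, rfl⟩
      exact ne_top_of_le_ne_top (EReal.coe_ne_top r) hr
  rw [this]
  exact hh.linear_image (LinearMap.fst ℝ H ℝ)

lemma mem_fdom_fconj_iff {h : H → EReal} {w : H} :
    w ∈ fdom (fconj h) ↔ ∃ r : ℝ, ∀ x, ((⟪x, w⟫_ℝ : ℝ) : EReal) - h x ≤ r := by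
  refine ⟨fun hw => ⟨(fconj h w).toReal, fun x => ?_⟩, fun ⟨r, hr⟩ => ?_⟩
  · exact (le_iSup (fun x => ((⟪x, w⟫_ℝ : ℝ) : EReal) - h x) x).trans
      (EReal.le_coe_toReal hw)
  · exact ne_top_of_le_ne_top (EReal.coe_ne_top r) (iSup_le hr)

lemma convex_fdom_fconj (h : H → EReal) : Convex ℝ (fdom (fconj h)) := by
  intro u₁ hu₁ u₂ hu₂ a b ha hb hab
  rw [mem_fdom_fconj_iff] at hu₁ hu₂ ⊢
  obtain ⟨r₁, hr₁⟩ := hu₁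
  obtain ⟨r₂, hr₂⟩ := hu₂
  refine ⟨a * r₁ + b * r₂, fun x => ?_⟩
  have h₁ := hr₁ x
  have h₂ := hr₂ x
  generalize h x = c at h₁ h₂ ⊢
  induction c using EReal.rec with
  | bot => simp at h₁
  | top => simp
  | coe c =>
    norm_cast at h₁ h₂ ⊢
    rw [inner_add_right, real_inner_smul_right, real_inner_smul_right]
    have hc : c = a * c + b * c := by linear_combination (-c) * hab
    linarith [mul_le_mul_of_nonneg_left h₁ ha, mul_le_mul_of_nonneg_left h₂ hb]

lemma barrierCone_fdom_subset_recCone_fdom_fconj (h : H → EReal) :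
    barrierCone (fdom h) ⊆ recCone (fdom (fconj h)) := by
  rintro u ⟨M, hM⟩ w hw
  rw [mem_fdom_fconj_iff] at hw ⊢
  obtain ⟨r, hr⟩ := hw
  refine ⟨r + M, fun x => ?_⟩
  have hx := hr x
  by_cases htop : h x = ⊤
  · simp [htop]
  have hxu : ⟪x, u⟫_ℝ ≤ M := hM ⟨x, htop, rfl⟩
  generalize h x = c at hx htop ⊢
  induction c using EReal.rec with
  | bot => simp at hx
  | top => exact absurd rfl htop
  | coe c =>
    norm_cast at hx ⊢
    rw [inner_add_right]
    linarith

theorem neg_vP_eq_proj_polar_recCone_general {H : Type*} [NormedAddCommGroup H] [InnerProductSpace ℝ H]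
    [FiniteDimensional ℝ H]
    (f g : H → EReal)
    (hf_cvx : ConvexFn f)
    (hg_cvx : ConvexFn g)
    (vP : H) (hvP : IsMinNormPoint (closure (fdom f - fdom g)) vP)
    (vD : H) (hvD : IsMinNormPoint (closure (fdom (fconj f) + fdom (fconj g))) vD)
    : IsProjOn (polarCone (recCone (closure (fdom f)))) (-(vP + vD)) (-vP) := by
  have hvP_polar := hvP.neg_mem_polarCone_recCone
    (hf_cvx.convex_fdom.sub hg_cvx.convex_fdom).closure
  have hvD_polar := hvD.neg_mem_polarCone_recCone
    ((convex_fdom_fconj f).add (convex_fdom_fconj g)).closure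
  have hbar_f : barrierCone (fdom f) ⊆ recCone (closure (fdom (fconj f) + fdom (fconj g))) :=
    (barrierCone_fdom_subset_recCone_fdom_fconj f).trans <|
      (recCone_subset_recCone_add_left _ _).trans (recCone_subset_recCone_closure _)
  have hbar_g : barrierCone (fdom g) ⊆ recCone (closure (fdom (fconj f) + fdom (fconj g))) :=
    (barrierCone_fdom_subset_recCone_fdom_fconj g).trans <|
      (recCone_subset_recCone_add_right _ _).trans (recCone_subset_recCone_closure _)
  have hrec_f : -vD ∈ recCone (closure (fdom f)) :=
    polarCone_barrierCone_subset_recCone_closure hf_cvx.convex_fdom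
      (polarCone_anti hbar_f hvD_polar)
  have hrec_g : -vD ∈ recCone (closure (fdom g)) :=
    polarCone_barrierCone_subset_recCone_closure hg_cvx.convex_fdom
      (polarCone_anti hbar_g hvD_polar)
  have hvD_vP : ⟪vD, -vP⟫_ℝ ≤ 0 :=
    hvP_polar vD (neg_neg vD ▸ neg_mem_recCone_closure_sub hrec_g)
  refine isProjOn_of_inner_le
    (polarCone_anti (recCone_closure_subset_recCone_closure_sub_left _ _) hvP_polar) fun w hw => ?_
  calc ⟪-(vP + vD) - -vP, w - -vP⟫_ℝ = ⟪-vD, w⟫_ℝ + ⟪vD, -vP⟫_ℝ := by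
        rw [show -(vP + vD) - -vP = -vD by abel, sub_neg_eq_add, inner_add_right,
          inner_neg_left vD vP, ← inner_neg_right]
    _ ≤ 0 := add_nonpos (hw (-vD) hrec_f) hvD_vP

theorem neg_vP_eq_proj_polar_recCone {H : Type*} [NormedAddCommGroup H] [InnerProductSpace ℝ H]
    [FiniteDimensional ℝ H]
    (f g : H → EReal)
    (hf_prop : ProperFn f) (hf_lsc : LowerSemicontinuous f) (hf_cvx : ConvexFn f)
    (hg_prop : ProperFn g) (hg_lsc : LowerSemicontinuous g) (hg_cvx : ConvexFn g)
    (vP : H) (hvP : IsMinNormPoint (closure (fdom f - fdom g)) vP)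
    (vD : H) (hvD : IsMinNormPoint (closure (fdom (fconj f) + fdom (fconj g))) vD)
    : IsProjOn (polarCone (recCone (closure (fdom f)))) (-(vP + vD)) (-vP) :=
  neg_vP_eq_proj_polar_recCone_general f g hf_cvx hg_cvx vP hvP vD hvD

end
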